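/- Let G be a graph on n vertices with spectrum {λ_0^{m_0}, λ_1^{m_1}, …, λ_d^{m_d}}. Then the spectrum of the extended bipartite double graph Ĝ is {±(1+λ_0)^{m_0}, ±(1+λ_1)^{m_1}, …, ±(1+λ_d)^{m_d}}; that is, μ is an eigenvalue of Ĝ with multiplicity m exactly when μ = 1+λ or μ = −(1+λ) for an eigenvalue λ of G of multiplicity m (multiplicities of coinciding values being added). -/

import Mathlib

open Polynomial Matrix SimpleGraph

/-- The extended bipartite double graph of `G`: the bipartite double graph with
the extra edges `i i'`. -/
def extendedBipartiteDouble {V : Type*} (G : SimpleGraph V) :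
    SimpleGraph (V × Bool) where
  Adj a b := (G.Adj a.1 b.1 ∨ a.1 = b.1) ∧ a.2 ≠ b.2
  symm := ⟨fun a b h => ⟨h.1.imp (fun h' => h'.symm) (fun h' => h'.symm), h.2.symm⟩⟩
  loopless := ⟨fun a h => h.2 rfl⟩

instance {V : Type*} (G : SimpleGraph V) [DecidableEq V] [DecidableRel G.Adj] :
    DecidableRel (extendedBipartiteDouble G).Adj :=
  fun a b => inferInstanceAs (Decidable ((G.Adj a.1 b.1 ∨ a.1 = b.1) ∧ a.2 ≠ b.2))

/-!
Listing the vertices as `1, …, n, 1', …, n'`, the adjacency matrix of `Ĝ` is the block matrix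
`[[0, B], [B, 0]]` with `B = A + I`, `A` the adjacency matrix of `G`. Block elimination gives
`det [[P, Q], [Q, P]] = det (P + Q) * det (P - Q)`, so `χ_Ĝ = χ_B * χ_{-B}`. The roots of `χ_B`
are those of `χ_A` shifted by `1`, and the roots of `χ_{-B}` are their negatives.
-/

namespace Matrix

variable {R m : Type*} [CommRing R] [Fintype m] [DecidableEq m]

theorem det_fromBlocks_self_self (P Q : Matrix m m R) :
    (fromBlocks P Q Q P).det = (P + Q).det * (P - Q).det := by
  have hconj : fromBlocks 1 1 0 1 * fromBlocks P Q Q P * fromBlocks 1 (-1) 0 1 =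
      fromBlocks (P + Q) 0 Q (P - Q) := by
    simp only [fromBlocks_multiply]
    congr 1 <;> noncomm_ring
  simpa [det_fromBlocks_zero₂₁, det_fromBlocks_zero₁₂] using congrArg det hconj

theorem charpoly_fromBlocks_self_self (A B : Matrix m m R) :
    (fromBlocks A B B A).charpoly = (A + B).charpoly * (A - B).charpoly := by
  rw [charpoly, charmatrix_fromBlocks, det_fromBlocks_self_self]
  simp only [charpoly, charmatrix, RingHom.mapMatrix_apply, map_add, map_sub]
  congr 2 <;> abel

theorem charpoly_neg (M : Matrix m m R) :
    (-M).charpoly = (-1 : R) ^ Fintype.card m • M.charpoly.comp (-X) := by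
  have hcharmatrix : (charmatrix M).map (fun p => p.comp (-X)) = -charmatrix (-M) := by
    ext i j : 1
    by_cases hij : i = j
    · simp [hij, sub_eq_add_neg, add_comm]
    · simp [charmatrix_apply_ne _ _ _ hij]
  have hdet : M.charpoly.comp (-X) = (-1 : R) ^ Fintype.card m • (-M).charpoly := by
    rw [charpoly, ← coe_compRingHom_apply, RingHom.map_det, RingHom.mapMatrix_apply]
    simp only [coe_compRingHom, hcharmatrix, det_neg, charpoly, smul_eq_C_mul, map_pow, map_neg, map_one]
  rw [hdet, smul_smul, ← pow_add, ← two_mul, pow_mul, neg_one_sq, one_pow, one_smul]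

section IsDomain

variable [IsDomain R]

theorem roots_charpoly_add_scalar (M : Matrix m m R) (μ : R) :
    (M + scalar m μ).charpoly.roots = M.charpoly.roots.map (· + μ) := by
  rw [← sub_neg_eq_add, ← map_neg, charpoly_sub_scalar,
    ← map_roots_comp_C_mul_X_add_C M.charpoly 1 (-μ) isUnit_one, Multiset.map_map]
  simp

theorem roots_charpoly_neg (M : Matrix m m R) :
    (-M).charpoly.roots = M.charpoly.roots.map Neg.neg := by
  rw [charpoly_neg, roots_smul_nonzero _ (pow_ne_zero _ (neg_ne_zero.2 one_ne_zero)),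
    roots_comp_neg_X]

end IsDomain

end Matrix

namespace SimpleGraph

@[simp]
theorem extendedBipartiteDouble_adj {V : Type*} (G : SimpleGraph V) {a b : V × Bool} :
    (extendedBipartiteDouble G).Adj a b ↔ (G.Adj a.1 b.1 ∨ a.1 = b.1) ∧ a.2 ≠ b.2 :=
  Iff.rfl

theorem charpoly_adjMatrix_extendedBipartiteDouble {V R : Type*} [Fintype V] [DecidableEq V]
    [CommRing R] (G : SimpleGraph V) [DecidableRel G.Adj] :
    ((extendedBipartiteDouble G).adjMatrix R).charpoly =
      (G.adjMatrix R + 1).charpoly * (-(G.adjMatrix R + 1)).charpoly := by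
  let e := (Equiv.prodComm V Bool).trans (Equiv.boolProdEquivSum V)
  have hblocks : reindex e e ((extendedBipartiteDouble G).adjMatrix R) =
      fromBlocks 0 (G.adjMatrix R + 1) (G.adjMatrix R + 1) 0 := by
    ext (i | i) (j | j) <;> by_cases hij : i = j <;>
      simp [e, Equiv.boolProdEquivSum, adjMatrix_apply, one_apply, hij]
  rw [← charpoly_reindex e, hblocks, charpoly_fromBlocks_self_self, zero_add, zero_sub]

end SimpleGraph

/-- If `G` has spectrum `{λ_0^{m_0}, …, λ_d^{m_d}}`, then the spectrum of the
extended bipartite double graph `Ĝ` is `{±(1+λ_0)^{m_0}, …, ±(1+λ_d)^{m_d}}`: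
the multiset of eigenvalues of `Ĝ` is obtained from that of `G` by taking
`1 + λ` and `-(1 + λ)` for each eigenvalue `λ` of `G` (with multiplicities,
multiplicities of coinciding values being added). -/
theorem spectrum_extendedBipartiteDouble (n : ℕ) (G : SimpleGraph (Fin n))
    [DecidableRel G.Adj] :
    ((extendedBipartiteDouble G).adjMatrix ℝ).charpoly.roots =
      (G.adjMatrix ℝ).charpoly.roots.map (fun x => 1 + x) +
        (G.adjMatrix ℝ).charpoly.roots.map (fun x => -(1 + x)) := by
  rw [G.charpoly_adjMatrix_extendedBipartiteDouble,
    roots_mul (mul_ne_zero (charpoly_monic _).ne_zero (charpoly_monic _).ne_zero),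
    roots_charpoly_neg, ← map_one (scalar (Fin n)), roots_charpoly_add_scalar, Multiset.map_map]
  simp only [add_comm, Function.comp_def]
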